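/- arXiv:1710.06544 — 5 statements merged into one kernel-verified Lean document; each statement's English description precedes it below -/
import Mathlib

section
/- Let {Φₙ}, {Δₙ}, {θₙ} be sequences in [0,∞) with Φ_{n+1} ≤ Φₙ + θₙ(Φₙ - Φ_{n-1}) + Δₙ for all n ≥ 1, ∑ Δₙ < ∞, and 0 ≤ θₙ ≤ θ < 1 for all n with some fixed θ. Then ∑_{n≥1} max(Φₙ - Φ_{n-1}, 0) < ∞ and the sequence {Φₙ} converges to some limit Φ* ∈ [0,∞). -/
/-!
The positive parts `dₙ = max (Φₙ₊₁ - Φₙ) 0` of the increments obey the contracting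
recursion `dₙ₊₁ ≤ θ dₙ + Δₙ₊₁`, so their partial sums satisfy `(1 - θ) ∑ d ≤ d₀ + ∑ Δ` and
`∑ dₙ < ∞`. Then `Φₙ - ∑_{k<n} d_k` is nonincreasing and bounded below, hence convergent, and
so is `Φₙ`.
-/

open Filter Finset Topology

theorem summable_of_succ_le_mul_add {d e : ℕ → ℝ} {θ : ℝ} (hd : ∀ n, 0 ≤ d n)
    (he : ∀ n, 0 ≤ e n) (he_sum : Summable e) (hθ₀ : 0 ≤ θ) (hθ₁ : θ < 1)
    (hrec : ∀ n, d (n + 1) ≤ θ * d n + e n) : Summable d := by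
  have hpartial : ∀ N, ∑ n ∈ range (N + 1), d n
      ≤ d 0 + θ * ∑ n ∈ range (N + 1), d n + ∑' n, e n := by
    intro N
    have hshift : ∑ m ∈ range N, d (m + 1) ≤ θ * ∑ m ∈ range N, d m + ∑ m ∈ range N, e m := by
      rw [mul_sum, ← sum_add_distrib]
      exact sum_le_sum fun m _ => hrec m
    have hmono : θ * ∑ m ∈ range N, d m ≤ θ * ∑ m ∈ range (N + 1), d m :=
      mul_le_mul_of_nonneg_left (sum_le_sum_of_subset_of_nonneg (range_subset_range.2 N.le_succ)
        fun i _ _ => hd i) hθ₀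
    have he_le : ∑ m ∈ range N, e m ≤ ∑' m, e m := he_sum.sum_le_tsum _ fun i _ => he i
    rw [sum_range_succ'] at hmono ⊢
    linarith
  refine summable_of_sum_range_le (c := (d 0 + ∑' n, e n) / (1 - θ)) hd fun N => ?_
  calc ∑ n ∈ range N, d n ≤ ∑ n ∈ range (N + 1), d n :=
        sum_le_sum_of_subset_of_nonneg (range_subset_range.2 N.le_succ) fun i _ _ => hd i
    _ ≤ (d 0 + ∑' n, e n) / (1 - θ) := by
        rw [le_div_iff₀ (by linarith)]
        linarith [hpartial N]

theorem exists_tendsto_of_bddBelow_of_summable_max_sub {Φ : ℕ → ℝ} (hΦ : BddBelow (Set.range Φ))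
    (hsum : Summable fun n => max (Φ (n + 1) - Φ n) 0) : ∃ L, Tendsto Φ atTop (𝓝 L) := by
  set d := fun n => max (Φ (n + 1) - Φ n) 0
  obtain ⟨b, hb⟩ := hΦ
  set t := fun n => Φ n - ∑ k ∈ range n, d k
  have ht_anti : Antitone t := antitone_nat_of_succ_le fun n => by
    simp only [t, sum_range_succ]
    linarith [le_max_left (Φ (n + 1) - Φ n) 0]
  have ht_bdd : BddBelow (Set.range t) := by
    refine ⟨b - ∑' n, d n, ?_⟩
    rintro _ ⟨n, rfl⟩
    have : ∑ k ∈ range n, d k ≤ ∑' k, d k := hsum.sum_le_tsum _ fun k _ => le_max_right _ _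
    linarith [hb ⟨n, rfl⟩]
  refine ⟨(⨅ n, t n) + ∑' n, d n, ?_⟩
  refine ((tendsto_atTop_ciInf ht_anti ht_bdd).add hsum.tendsto_sum_tsum_nat).congr fun n => ?_
  simp only [t, sub_add_cancel]

theorem max_sub_succ_le_of_inertial {Φ θseq : ℕ → ℝ} {θ δ : ℝ} {n : ℕ}
    (hθseq₀ : 0 ≤ θseq (n + 1)) (hθseq : θseq (n + 1) ≤ θ) (hθ₀ : 0 ≤ θ) (hδ : 0 ≤ δ)
    (hrec : Φ (n + 2) ≤ Φ (n + 1) + θseq (n + 1) * (Φ (n + 1) - Φ n) + δ) :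
    max (Φ (n + 2) - Φ (n + 1)) 0 ≤ θ * max (Φ (n + 1) - Φ n) 0 + δ := by
  have hd : 0 ≤ max (Φ (n + 1) - Φ n) 0 := le_max_right _ _
  have hinertial : θseq (n + 1) * (Φ (n + 1) - Φ n) ≤ θ * max (Φ (n + 1) - Φ n) 0 :=
    calc θseq (n + 1) * (Φ (n + 1) - Φ n) ≤ θseq (n + 1) * max (Φ (n + 1) - Φ n) 0 :=
          mul_le_mul_of_nonneg_left (le_max_left _ _) hθseq₀
      _ ≤ θ * max (Φ (n + 1) - Φ n) 0 := mul_le_mul_of_nonneg_right hθseq hd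
  exact max_le (by linarith) (by positivity)

/-- Lemma of Alvarez–Attouch on quasi-Fejér type sequences with inertial perturbation. -/
theorem alvarez_attouch_lemma
    (Φ Δ θseq : ℕ → ℝ)
    (hΦ : ∀ n, 0 ≤ Φ n) (hΔ : ∀ n, 0 ≤ Δ n) (hθnonneg : ∀ n, 0 ≤ θseq n)
    (θ : ℝ) (hθ : θ < 1) (hθle : ∀ n, θseq n ≤ θ)
    (hrec : ∀ n, 1 ≤ n → Φ (n + 1) ≤ Φ n + θseq n * (Φ n - Φ (n - 1)) + Δ n)
    (hsum : Summable Δ) :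
    Summable (fun n => max (Φ (n + 1) - Φ n) 0) ∧
      ∃ Φstar : ℝ, 0 ≤ Φstar ∧ Filter.Tendsto Φ Filter.atTop (nhds Φstar) := by
  have hθ₀ : 0 ≤ θ := (hθnonneg 0).trans (hθle 0)
  have hdsum : Summable fun n => max (Φ (n + 1) - Φ n) 0 := by
    refine summable_of_succ_le_mul_add (fun n => le_max_right _ _) (fun n => hΔ (n + 1))
      ((summable_nat_add_iff 1).2 hsum) hθ₀ hθ fun n => ?_
    exact max_sub_succ_le_of_inertial (hθnonneg _) (hθle _) hθ₀ (hΔ _) (hrec (n + 1) n.succ_pos)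
  obtain ⟨L, hL⟩ := exists_tendsto_of_bddBelow_of_summable_max_sub ⟨0, by
    rintro _ ⟨n, rfl⟩; exact hΦ n⟩ hdsum
  exact ⟨hdsum, L, ge_of_tendsto' hL hΦ, hL⟩
end

section
/- Let C ⊆ H be nonempty closed convex and f : H × H → ℝ satisfy: f(x,x)=0 on C; f strongly pseudomonotone on C with constant γ > 0; f satisfying the Lipschitz-type condition with constant L > 0; f(x,·) convex lower semicontinuous. Let x* ∈ C be the solution of the equilibrium problem f(x*,y) ≥ 0 for all y ∈ C. If λ > 0 and w ∈ C, and x⁺ = argmin{λ f(w,y) + ½‖w-y‖² : y ∈ C}, then (1 + λ(2γ - L√λ))‖x⁺ - x*‖² ≤ ‖w - x*‖² - (1 - L√λ)‖x⁺ - w‖². -/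
open RealInnerProductSpace

/-- One-step estimate for the proximal-like regularized step. -/
theorem one_step_prox_estimate
    {H : Type*} [NormedAddCommGroup H] [InnerProductSpace ℝ H] [CompleteSpace H]
    (C : Set H) (hCne : C.Nonempty) (hCclosed : IsClosed C) (hCconv : Convex ℝ C)
    (f : H → H → ℝ) (γ L : ℝ) (hγ : 0 < γ) (hL : 0 < L)
    (hA1 : ∀ x ∈ C, f x x = 0)
    (hA2 : ∀ x ∈ C, ∀ y ∈ C, 0 ≤ f x y → f y x ≤ -γ * ‖x - y‖ ^ 2)
    (hA3 : ∀ x y z : H, f x y + f y z ≥ f x z - L * ‖x - y‖ * ‖y - z‖)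
    (hA4 : ∀ x : H, ConvexOn ℝ C (f x) ∧ LowerSemicontinuousOn (f x) C)
    (xstar : H) (hxstarC : xstar ∈ C) (hsol : ∀ y ∈ C, 0 ≤ f xstar y)
    (lam : ℝ) (hlam : 0 < lam) (w : H) (hwC : w ∈ C)
    (xplus : H) (hxplusC : xplus ∈ C)
    (hmin : ∀ y ∈ C,
      lam * f w xplus + 1 / 2 * ‖w - xplus‖ ^ 2 ≤ lam * f w y + 1 / 2 * ‖w - y‖ ^ 2) :
    (1 + lam * (2 * γ - L * Real.sqrt lam)) * ‖xplus - xstar‖ ^ 2 ≤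
      ‖w - xstar‖ ^ 2 - (1 - L * Real.sqrt lam) * ‖xplus - w‖ ^ 2 := by
  -- key variational inequality
  have key : ∀ y ∈ C, ⟪w - xplus, y - xplus⟫ ≤ lam * (f w y - f w xplus) := by
    intro y hyC
    have step : ∀ t : ℝ, 0 < t → t ≤ 1 →
        ⟪w - xplus, y - xplus⟫ ≤ lam * (f w y - f w xplus) + t / 2 * ‖y - xplus‖ ^ 2 := by
      intro t ht ht1
      set z := (1 - t) • xplus + t • y with hz
      have hzC : z ∈ C := hCconv hxplusC hyC (by linarith) ht.le (by ring)
      have hconv : f w z ≤ (1 - t) * f w xplus + t * f w y :=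
        (hA4 w).1.2 hxplusC hyC (by linarith) ht.le (by ring)
      have hwz : w - z = (w - xplus) - t • (y - xplus) := by
        rw [hz]; module
      have hnorm : ‖w - z‖ ^ 2 =
          ‖w - xplus‖ ^ 2 - 2 * (t * ⟪w - xplus, y - xplus⟫) + t ^ 2 * ‖y - xplus‖ ^ 2 := by
        rw [hwz, @norm_sub_sq_real, real_inner_smul_right, norm_smul]
        simp [abs_of_pos ht, mul_pow]
      have h2 : lam * f w xplus + 1 / 2 * ‖w - xplus‖ ^ 2 ≤
          lam * ((1 - t) * f w xplus + t * f w y) + 1 / 2 * ‖w - z‖ ^ 2 := by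
        have := hmin z hzC
        nlinarith [this, hconv, hlam]
      rw [hnorm] at h2
      have h4 : t * ⟪w - xplus, y - xplus⟫ ≤
          t * (lam * (f w y - f w xplus) + t / 2 * ‖y - xplus‖ ^ 2) := by nlinarith
      exact le_of_mul_le_mul_left h4 ht
    refine le_of_forall_pos_le_add ?_
    intro ε hε
    set c := ‖y - xplus‖ ^ 2 with hc
    have hcnn : 0 ≤ c := by positivity
    set t := min 1 (2 * ε / (c + 1)) with htdef
    have ht0 : 0 < t := lt_min one_pos (by positivity)
    have ht1 : t ≤ 1 := min_le_left _ _
    have h := step t ht0 ht1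
    have htc : t / 2 * c ≤ ε := by
      have h1 : t ≤ 2 * ε / (c + 1) := min_le_right _ _
      have h2 : t * (c + 1) ≤ 2 * ε := by
        have h3 := mul_le_mul_of_nonneg_right h1 (by positivity : (0:ℝ) ≤ c + 1)
        rwa [div_mul_cancel₀ _ (by positivity : (c + 1 : ℝ) ≠ 0)] at h3
      nlinarith
    linarith
  -- apply with y = xstar
  have hkey := key xstar hxstarC
  -- Lipschitz-type
  have hlip := hA3 w xplus xstar
  -- strong pseudomonotonicity
  have hpm : f xplus xstar ≤ -γ * ‖xstar - xplus‖ ^ 2 :=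
    hA2 xstar hxstarC xplus hxplusC (hsol xplus hxplusC)
  -- inner product identity
  have hid : 2 * ⟪w - xplus, xstar - xplus⟫ =
      ‖w - xplus‖ ^ 2 + ‖xstar - xplus‖ ^ 2 - ‖w - xstar‖ ^ 2 := by
    have h := @norm_sub_sq_real _ _ _ (w - xplus) (xstar - xplus)
    have e : w - xplus - (xstar - xplus) = w - xstar := by abel
    rw [e] at h; linarith
  have hs : Real.sqrt lam ^ 2 = lam := Real.sq_sqrt hlam.le
  have hspos : 0 < Real.sqrt lam := Real.sqrt_pos.mpr hlam
  have e1 : ‖xstar - xplus‖ = ‖xplus - xstar‖ := norm_sub_rev _ _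
  have e2 : ‖xplus - w‖ = ‖w - xplus‖ := norm_sub_rev _ _
  have e3 : ‖xplus - xstar‖ = ‖xstar - xplus‖ := norm_sub_rev _ _
  rw [← e1] at hlip
  have hamgm : 2 * lam * L * (‖w - xplus‖ * ‖xstar - xplus‖) ≤
      L * Real.sqrt lam * ‖w - xplus‖ ^ 2 +
        L * lam * Real.sqrt lam * ‖xstar - xplus‖ ^ 2 := by
    set a := ‖w - xplus‖
    set b := ‖xstar - xplus‖
    set s := Real.sqrt lam with hsdef
    have expand : L * s * (a - s * b) ^ 2 =
        L * s * a ^ 2 - 2 * lam * L * (a * b) + L * lam * s * b ^ 2 := by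
      linear_combination (L * s * b ^ 2 - 2 * L * a * b) * hs
    have hnn : 0 ≤ L * s * (a - s * b) ^ 2 := by positivity
    linarith [expand ▸ hnn]
  have h6 : f w xstar - f w xplus ≤
      -γ * ‖xstar - xplus‖ ^ 2 + L * ‖w - xplus‖ * ‖xstar - xplus‖ := by linarith
  have h7 : lam * (f w xstar - f w xplus) ≤
      lam * (-γ * ‖xstar - xplus‖ ^ 2 + L * ‖w - xplus‖ * ‖xstar - xplus‖) :=
    mul_le_mul_of_nonneg_left h6 hlam.le
  rw [e2, e3]
  nlinarith [hkey, hid, h7, hamgm]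
end

section
/- Let 0 < λ, γ, L with L√λ < 1 and 0 ≤ θ satisfying θ(3 - L√λ + 2λ(2γ - L√λ)) ≤ 1 - L√λ. Define A = (1+θ)/(1+λ(2γ-L√λ)), B = (1-θ)(1-L√λ)/(1+λ(2γ-L√λ)), C = θ[1+θ+(1-θ)(1-L√λ)]/(1+λ(2γ-L√λ)). Then AB ≥ C. -/
/-- Under (H4)-(H5) type conditions, the constants `A`, `B`, `C` satisfy `A * B ≥ C`. -/
theorem AB_ge_C
    (lam γ L θ : ℝ) (hlam : 0 < lam) (hγ : 0 < γ) (hL : 0 < L)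
    (h1 : L * Real.sqrt lam < 1) (hpos : 0 < lam * (2 * γ - L * Real.sqrt lam))
    (hθ0 : 0 ≤ θ) (hθ1 : θ < 1)
    (hθ : θ * (3 - L * Real.sqrt lam + 2 * lam * (2 * γ - L * Real.sqrt lam)) ≤
      1 - L * Real.sqrt lam) :
    ((1 + θ) / (1 + lam * (2 * γ - L * Real.sqrt lam))) *
        ((1 - θ) * (1 - L * Real.sqrt lam) / (1 + lam * (2 * γ - L * Real.sqrt lam))) ≥
      θ * (1 + θ + (1 - θ) * (1 - L * Real.sqrt lam)) /
        (1 + lam * (2 * γ - L * Real.sqrt lam)) := by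
  set s := L * Real.sqrt lam with hs
  set p := lam * (2 * γ - s) with hp
  have hu : 0 < 1 - s := by linarith
  have hD : (0:ℝ) < 1 + p := by linarith
  -- key facts
  have hθ' : θ * (3 - s + 2 * p) ≤ 1 - s := by
    calc θ * (3 - s + 2 * p) = θ * (3 - s + 2 * lam * (2 * γ - s)) := by rw [hp]; ring
      _ ≤ 1 - s := hθ
  have hs0 : 0 ≤ s := by positivity
  have hθs : 0 ≤ θ * (1 - s) := mul_nonneg hθ0 hu.le
  have hθp0 : 0 ≤ θ * p := mul_nonneg hθ0 hpos.le
  have hk1 : (1 - s) * (1 - θ) ≥ 2 * θ * (1 + p) := by nlinarith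
  have hθp : θ * p ≤ 1 / 2 := by nlinarith [mul_nonneg hθ0 hs0]
  have hθ2 : θ * (1 + 2 * p) ≤ 1 := by nlinarith [mul_nonneg hθ0 hs0]
  have key : θ * (1 + θ + (1 - θ) * (1 - s)) * (1 + p) ≤ (1 + θ) * ((1 - θ) * (1 - s)) := by
    nlinarith [mul_le_mul_of_nonneg_left hk1 (by linarith : (0:ℝ) ≤ 1 - θ * p),
      mul_nonneg (mul_nonneg hθ0 hD.le) (by linarith : (0:ℝ) ≤ 1 - θ * (1 + 2 * p))]
  rw [ge_iff_le, div_mul_div_comm, div_le_div_iff₀ hD (by positivity)]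
  nlinarith [mul_le_mul_of_nonneg_right key hD.le]
end

section
/- Let f(x,y) = x(y-x) for x,y ∈ ℝ (so C = H = ℝ), whose equilibrium problem has unique solution x* = 0. Consider the iteration x_{n+1} = (1-λₙ)xₙ with λₙ → 0, λₙ ≠ 1, and x₀ ≠ 0. Then xₙ ≠ 0 for all n and lim_{n→∞} |x_{n+1}|/|xₙ| = 1; consequently, there is no α ∈ (0,1) with |x_{n+1}| ≤ α|xₙ| for all n, i.e., the iteration does not converge linearly. -/
/-- The algorithm with diminishing stepsizes cannot converge linearly:
counterexample `f(x,y) = x(y-x)` on `ℝ`, where `x_{n+1} = (1-λ_n) x_n`. -/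
theorem no_linear_convergence_diminishing_stepsizes
    (lam : ℕ → ℝ) (hpos : ∀ n, 0 < lam n) (hne : ∀ n, lam n ≠ 1)
    (hlim : Filter.Tendsto lam Filter.atTop (nhds 0))
    (x : ℕ → ℝ) (hx0 : x 0 ≠ 0)
    (hrec : ∀ n, x (n + 1) = (1 - lam n) * x n) :
    (∀ n, x n ≠ 0) ∧
      Filter.Tendsto (fun n => |x (n + 1) - 0| / |x n - 0|) Filter.atTop (nhds 1) ∧
      ¬∃ α : ℝ, 0 < α ∧ α < 1 ∧ ∀ n, |x (n + 1) - 0| ≤ α * |x n - 0| := by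
  have hxe : ∀ n, x n ≠ 0 := by
    intro n
    induction n with
    | zero => exact hx0
    | succ k ih =>
      rw [hrec k]
      exact mul_ne_zero (sub_ne_zero.mpr fun h => hne k h.symm) ih
  have hratio : ∀ n, |x (n + 1) - 0| / |x n - 0| = |1 - lam n| := by
    intro n
    rw [sub_zero, sub_zero, hrec n, abs_mul, mul_div_assoc,
      div_self (abs_ne_zero.mpr (hxe n)), mul_one]
  have htend : Filter.Tendsto (fun n => |x (n + 1) - 0| / |x n - 0|)
      Filter.atTop (nhds 1) := by
    simp only [hratio]
    have : Filter.Tendsto (fun n => |1 - lam n|) Filter.atTop (nhds |1 - 0|) :=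
      (continuous_abs.tendsto _).comp (tendsto_const_nhds.sub hlim)
    simpa using this
  refine ⟨hxe, htend, ?_⟩
  rintro ⟨α, hα0, hα1, hαle⟩
  have hle : ∀ n, |x (n + 1) - 0| / |x n - 0| ≤ α := by
    intro n
    rw [div_le_iff₀ (abs_pos.mpr (by simpa using hxe n))]
    exact hαle n
  have := le_of_tendsto htend (Filter.Eventually.of_forall hle)
  linarith
end

section
/- Let P, Q be real symmetric m×m matrices with Q positive semidefinite and Q - P symmetric negative definite, and q ∈ ℝᵐ. Then the bifunction f(x,y) = ⟨Px + Qy + q, y - x⟩ is strongly pseudomonotone on every set C ⊆ ℝᵐ: there exists γ > 0 (the smallest eigenvalue of P - Q) such that f(x,y) ≥ 0 implies f(y,x) ≤ -γ‖x-y‖² for all x,y ∈ C. Moreover, f satisfies the Lipschitz-type condition f(x,y) + f(y,z) ≥ f(x,z) - ‖P-Q‖‖y-x‖‖z-y‖ for all x,y,z ∈ ℝᵐ. -/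
/-!
With `T = P - Q`, the bifunction satisfies the identities
`f x y + f y x = -⟪T (x - y), x - y⟫` and, since `Q` is symmetric,
`f x y + f y z - f x z = ⟪T (y - x), z - y⟫`.
A positive definite `T` in finite dimension is coercive, `γ ‖d‖² ≤ ⟪T d, d⟫`, so the first
identity turns `0 ≤ f x y` into `f y x ≤ -γ ‖x - y‖²`; Cauchy–Schwarz and the operator norm
bound the second by `‖T‖ ‖y - x‖ ‖z - y‖`.
-/

open scoped RealInnerProductSpace

section NashCournot

variable {E : Type*} [NormedAddCommGroup E] [InnerProductSpace ℝ E]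

def nashCournotBifunction (A B : E →L[ℝ] E) (q x y : E) : ℝ :=
  ⟪A x + B y + q, y - x⟫

theorem nashCournotBifunction_add_swap (A B : E →L[ℝ] E) (q x y : E) :
    nashCournotBifunction A B q x y + nashCournotBifunction A B q y x =
      -⟪(A - B) (x - y), x - y⟫ := by
  simp only [nashCournotBifunction, sub_apply, map_sub, inner_add_left,
    inner_sub_left, inner_sub_right]
  ring

theorem nashCournotBifunction_add_sub (A : E →L[ℝ] E) {B : E →L[ℝ] E}
    (hB : (B : E →ₗ[ℝ] E).IsSymmetric) (q x y z : E) :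
    nashCournotBifunction A B q x y + nashCournotBifunction A B q y z -
        nashCournotBifunction A B q x z = ⟪(A - B) (y - x), z - y⟫ := by
  have hB' : ∀ u v, ⟪B u, v⟫ = ⟪B v, u⟫ := fun u v => (hB u v).trans (real_inner_comm _ _)
  simp only [nashCournotBifunction, sub_apply, map_sub, inner_add_left,
    inner_sub_left, inner_sub_right]
  rw [hB' y x, hB' z y, hB' z x]
  ring

theorem nashCournotBifunction_add_swap_le {A B : E →L[ℝ] E} {γ : ℝ}
    (hcoer : ∀ d, γ * ‖d‖ ^ 2 ≤ ⟪(A - B) d, d⟫) (q x y : E) :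
    nashCournotBifunction A B q x y + nashCournotBifunction A B q y x ≤ -γ * ‖x - y‖ ^ 2 := by
  linarith [nashCournotBifunction_add_swap A B q x y, hcoer (x - y)]

theorem nashCournotBifunction_lipschitzType (A : E →L[ℝ] E) {B : E →L[ℝ] E}
    (hB : (B : E →ₗ[ℝ] E).IsSymmetric) (q x y z : E) :
    nashCournotBifunction A B q x z - ‖A - B‖ * ‖y - x‖ * ‖z - y‖ ≤
      nashCournotBifunction A B q x y + nashCournotBifunction A B q y z := by
  have hcs : |⟪(A - B) (y - x), z - y⟫| ≤ ‖A - B‖ * ‖y - x‖ * ‖z - y‖ :=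
    calc |⟪(A - B) (y - x), z - y⟫| ≤ ‖(A - B) (y - x)‖ * ‖z - y‖ := abs_real_inner_le_norm _ _
      _ ≤ ‖A - B‖ * ‖y - x‖ * ‖z - y‖ := by gcongr; exact (A - B).le_opNorm _
  linarith [nashCournotBifunction_add_sub A hB q x y z, neg_abs_le ⟪(A - B) (y - x), z - y⟫]

end NashCournot

/-- Positivity on the unit sphere, which is compact, is uniform; homogeneity spreads it. -/
theorem ContinuousLinearMap.exists_pos_mul_sq_norm_le_inner {E : Type*} [NormedAddCommGroup E]
    [InnerProductSpace ℝ E] [FiniteDimensional ℝ E] (T : E →L[ℝ] E)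
    (hT : ∀ v ≠ 0, 0 < ⟪T v, v⟫) : ∃ γ, 0 < γ ∧ ∀ v, γ * ‖v‖ ^ 2 ≤ ⟪T v, v⟫ := by
  rcases subsingleton_or_nontrivial E with hE | hE
  · exact ⟨1, one_pos, fun v => by simp [Subsingleton.elim v 0]⟩
  obtain ⟨u, hu, hmin⟩ := (isCompact_sphere (0 : E) 1).exists_isMinOn
    (NormedSpace.sphere_nonempty.2 zero_le_one)
    (T.continuous.inner (𝕜 := ℝ) continuous_id).continuousOn
  have hu : ‖u‖ = 1 := by simpa using hu
  refine ⟨⟪T u, u⟫, hT u (norm_ne_zero_iff.1 (by simp [hu])), fun v => ?_⟩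
  rcases eq_or_ne v 0 with rfl | hv
  · simp
  have hvpos : 0 < ‖v‖ := norm_pos_iff.2 hv
  have hunit : ‖v‖⁻¹ • v ∈ Metric.sphere (0 : E) 1 := by
    simp [norm_smul, hvpos.ne']
  calc ⟪T u, u⟫ * ‖v‖ ^ 2 ≤ ⟪T (‖v‖⁻¹ • v), ‖v‖⁻¹ • v⟫ * ‖v‖ ^ 2 := by gcongr; exact hmin hunit
    _ = ⟪T v, v⟫ := by
      rw [map_smul, real_inner_smul_left, real_inner_smul_right]
      field_simp

theorem Matrix.PosDef.inner_toEuclideanCLM_pos {n : Type*} [Fintype n] [DecidableEq n]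
    {A : Matrix n n ℝ} (hA : A.PosDef) {v : EuclideanSpace ℝ n} (hv : v ≠ 0) :
    0 < ⟪Matrix.toEuclideanCLM (𝕜 := ℝ) A v, v⟫ := by
  have := hA.dotProduct_mulVec_pos (x := WithLp.equiv 2 (n → ℝ) v) (by simpa using hv)
  simpa [EuclideanSpace.inner_eq_star_dotProduct, Matrix.toLin'_apply, dotProduct_comm] using this

theorem Matrix.IsSymm.isSymmetric_toEuclideanCLM {n : Type*} [Fintype n] [DecidableEq n]
    {A : Matrix n n ℝ} (hA : A.IsSymm) :
    ((Matrix.toEuclideanCLM (𝕜 := ℝ) A : _ →L[ℝ] _) : EuclideanSpace ℝ n →ₗ[ℝ] _).IsSymmetric :=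
  Matrix.isSymmetric_toEuclideanLin_iff.2 (Matrix.isHermitian_iff_isSymm.2 hA)

theorem nash_cournot_bifunction_properties_general
    (m : ℕ) (P Q : Matrix (Fin m) (Fin m) ℝ) (q : EuclideanSpace ℝ (Fin m))
    (hQsymm : Q.IsSymm)
    (hnegdef : (P - Q).PosDef)
    (f : EuclideanSpace ℝ (Fin m) → EuclideanSpace ℝ (Fin m) → ℝ)
    (hf : ∀ x y, f x y =
      ⟪((WithLp.equiv 2 (Fin m → ℝ)).symm (P.mulVec x + Q.mulVec y) + q), y - x⟫) :
    (∀ C : Set (EuclideanSpace ℝ (Fin m)), ∃ γ : ℝ, 0 < γ ∧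
      ∀ x ∈ C, ∀ y ∈ C, 0 ≤ f x y → f y x ≤ -γ * ‖x - y‖ ^ 2) ∧
    (∀ x y z : EuclideanSpace ℝ (Fin m),
      f x y + f y z ≥ f x z - ‖Matrix.toEuclideanCLM (𝕜 := ℝ) (P - Q)‖ * ‖y - x‖ * ‖z - y‖) := by
  set A := Matrix.toEuclideanCLM (𝕜 := ℝ) P
  set B := Matrix.toEuclideanCLM (𝕜 := ℝ) Q
  have hAB : Matrix.toEuclideanCLM (𝕜 := ℝ) (P - Q) = A - B := map_sub _ _ _
  obtain rfl : f = nashCournotBifunction A B q := funext₂ hf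
  obtain ⟨γ, hγ, hcoer⟩ := (A - B).exists_pos_mul_sq_norm_le_inner fun v hv => by
    simpa [hAB] using hnegdef.inner_toEuclideanCLM_pos hv
  refine ⟨fun _ => ⟨γ, hγ, fun x _ y _ hxy => ?_⟩, fun x y z => ?_⟩
  · linarith [nashCournotBifunction_add_swap_le hcoer q x y]
  · rw [hAB]
    exact nashCournotBifunction_lipschitzType A hQsymm.isSymmetric_toEuclideanCLM q x y z

/-- The Nash–Cournot bifunction `f(x,y) = ⟨Px + Qy + q, y - x⟩` with `Q` positive
semidefinite and `Q - P` negative definite is strongly pseudomonotone and satisfies the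
Lipschitz-type condition with constant `‖P - Q‖`. -/
theorem nash_cournot_bifunction_properties
    (m : ℕ) (P Q : Matrix (Fin m) (Fin m) ℝ) (q : EuclideanSpace ℝ (Fin m))
    (hPsymm : P.IsSymm) (hQsymm : Q.IsSymm) (hQpsd : Q.PosSemidef)
    (hnegdef : (P - Q).PosDef)
    (f : EuclideanSpace ℝ (Fin m) → EuclideanSpace ℝ (Fin m) → ℝ)
    (hf : ∀ x y, f x y =
      ⟪((WithLp.equiv 2 (Fin m → ℝ)).symm (P.mulVec x + Q.mulVec y) + q), y - x⟫) :
    (∀ C : Set (EuclideanSpace ℝ (Fin m)), ∃ γ : ℝ, 0 < γ ∧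
      ∀ x ∈ C, ∀ y ∈ C, 0 ≤ f x y → f y x ≤ -γ * ‖x - y‖ ^ 2) ∧
    (∀ x y z : EuclideanSpace ℝ (Fin m),
      f x y + f y z ≥ f x z - ‖Matrix.toEuclideanCLM (𝕜 := ℝ) (P - Q)‖ * ‖y - x‖ * ‖z - y‖) :=
  nash_cournot_bifunction_properties_general m P Q q hQsymm hnegdef f hf
end
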